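/- arXiv:1807.01958 — 2 statements merged into one kernel-verified Lean document; each statement's English description precedes it below -/
import Mathlib

section
/- Let A satisfy the RIP of order s with constant δ_s < 1. Then for any two disjointly supported vectors x, x' whose supports together have size at most s, |⟨Ax, Ax'⟩| ≤ δ_s·‖x‖₂·‖x'‖₂. -/
/-!
Polarization: `4⟨Ax, Ax'⟩ = ‖A(x + x')‖² - ‖A(x - x')‖²`. Since `x` and `x'` are disjointly
supported, `x ± x'` are `s`-sparse with `‖x ± x'‖² = ‖x‖² + ‖x'‖²`, so RIP bounds the two terms
from above and below and gives `|⟨Ax, Ax'⟩| ≤ δ (‖x‖² + ‖x'‖²) / 2`. Applying this to the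
rescaled pair `‖x'‖ x, ‖x‖ x'` turns the arithmetic mean into the geometric one.
-/

open Finset

variable {m ι : Type*} [Fintype m] [Fintype ι]

def Matrix.RIP (A : Matrix m ι ℝ) (s : ℕ) (δ : ℝ) : Prop :=
  ∀ v : ι → ℝ, (univ.filter fun j => v j ≠ 0).card ≤ s →
    (1 - δ) * (∑ j, (v j)^2) ≤ (∑ i, (A.mulVec v i)^2) ∧
    (∑ i, (A.mulVec v i)^2) ≤ (1 + δ) * (∑ j, (v j)^2)

theorem card_filter_ne_zero_le_add {M : Type*} [Zero M] [DecidableEq M] {x y f : ι → M}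
    (hf : ∀ j, x j = 0 → y j = 0 → f j = 0) :
    (univ.filter fun j => f j ≠ 0).card
      ≤ (univ.filter fun j => x j ≠ 0).card + (univ.filter fun j => y j ≠ 0).card := by
  classical
  refine (card_le_card fun j hj => ?_).trans (card_union_le _ _)
  simp only [mem_filter, mem_union, mem_univ, true_and] at hj ⊢
  by_contra! h
  exact hj (hf j h.1 h.2)

theorem sum_sq_add_of_disjoint {R : Type*} [CommSemiring R] {x y : ι → R}
    (hdisj : ∀ j, x j = 0 ∨ y j = 0) :
    ∑ j, (x j + y j)^2 = ∑ j, (x j)^2 + ∑ j, (y j)^2 := by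
  rw [← sum_add_distrib]
  refine sum_congr rfl fun j _ => ?_
  rcases hdisj j with h | h <;> simp [h]

theorem sum_sq_pos_of_ne_zero {x : ι → ℝ} (hx : x ≠ 0) : 0 < ∑ j, (x j)^2 := by
  obtain ⟨j, hj⟩ := Function.ne_iff.1 hx
  exact sum_pos' (fun j _ => sq_nonneg (x j)) ⟨j, mem_univ j, sq_pos_of_ne_zero hj⟩

theorem Matrix.RIP.abs_sum_mulVec_mul_le {A : Matrix m ι ℝ} {s : ℕ} {δ : ℝ}
    (hA : A.RIP s δ) {x y : ι → ℝ} (hdisj : ∀ j, x j = 0 ∨ y j = 0)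
    (hcard : (univ.filter fun j => x j ≠ 0).card + (univ.filter fun j => y j ≠ 0).card ≤ s) :
    |∑ i, A.mulVec x i * A.mulVec y i| ≤ δ / 2 * (∑ j, (x j)^2 + ∑ j, (y j)^2) := by
  have hneg : ∀ j, x j = 0 ∨ -y j = 0 := by simpa only [neg_eq_zero] using hdisj
  have hadd := hA (x + y) <|
    (card_filter_ne_zero_le_add fun j hx hy => by simp [hx, hy]).trans hcard
  have hsub := hA (x + -y) <|
    (card_filter_ne_zero_le_add fun j hx hy => by simp [hx, hy]).trans hcard
  simp only [Matrix.mulVec_add, Matrix.mulVec_neg, Pi.add_apply, Pi.neg_apply,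
    sum_sq_add_of_disjoint hdisj, sum_sq_add_of_disjoint hneg, neg_sq] at hadd hsub
  have polarization : ∑ i, (A.mulVec x i + A.mulVec y i)^2 - ∑ i, (A.mulVec x i + -A.mulVec y i)^2
      = 4 * ∑ i, A.mulVec x i * A.mulVec y i := by
    rw [← sum_sub_distrib, mul_sum]
    exact sum_congr rfl fun i _ => by ring
  rw [abs_le]
  constructor <;> linarith [hadd.2, hsub.1]

theorem rip_inner_product_bound_general (d r s : ℕ) (δ : ℝ)
    (A : Matrix (Fin d) (Fin r) ℝ)
    (hRIP : ∀ v : Fin r → ℝ, (Finset.univ.filter fun j => v j ≠ 0).card ≤ s →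
      (1 - δ) * (∑ j, (v j)^2) ≤ (∑ i, (A.mulVec v i)^2) ∧
      (∑ i, (A.mulVec v i)^2) ≤ (1 + δ) * (∑ j, (v j)^2))
    (x x' : Fin r → ℝ)
    (hdisj : ∀ j, x j = 0 ∨ x' j = 0)
    (hcard : (Finset.univ.filter fun j => x j ≠ 0).card
      + (Finset.univ.filter fun j => x' j ≠ 0).card ≤ s) :
    |∑ i, A.mulVec x i * A.mulVec x' i|
      ≤ δ * Real.sqrt (∑ j, (x j)^2) * Real.sqrt (∑ j, (x' j)^2) := by
  have hA : A.RIP s δ := hRIP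
  rcases eq_or_ne x 0 with rfl | hx
  · simp
  rcases eq_or_ne x' 0 with rfl | hx'
  · simp
  set a := Real.sqrt (∑ j, (x j)^2)
  set b := Real.sqrt (∑ j, (x' j)^2)
  have ha2 : ∑ j, (x j)^2 = a^2 := (Real.sq_sqrt (by positivity)).symm
  have hb2 : ∑ j, (x' j)^2 = b^2 := (Real.sq_sqrt (by positivity)).symm
  have ha : 0 < a := Real.sqrt_pos.2 (sum_sq_pos_of_ne_zero hx)
  have hb : 0 < b := Real.sqrt_pos.2 (sum_sq_pos_of_ne_zero hx')
  have hscaled := hA.abs_sum_mulVec_mul_le (x := b • x) (y := a • x')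
    (by simpa [ha.ne', hb.ne'] using hdisj) (by simpa [ha.ne', hb.ne'] using hcard)
  simp only [Matrix.mulVec_smul, Pi.smul_apply, smul_eq_mul, mul_pow, ← mul_sum, ha2, hb2]
    at hscaled
  refine le_of_mul_le_mul_left ?_ (mul_pos ha hb)
  calc a * b * |∑ i, A.mulVec x i * A.mulVec x' i|
      = |∑ i, b * A.mulVec x i * (a * A.mulVec x' i)| := by
        rw [← abs_of_pos (mul_pos ha hb), ← abs_mul, mul_sum]
        exact congrArg _ (sum_congr rfl fun i _ => by ring)
    _ ≤ δ / 2 * (b ^ 2 * a ^ 2 + a ^ 2 * b ^ 2) := hscaled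
    _ = a * b * (δ * a * b) := by ring

/-- If `A` satisfies RIP of order `s` with constant `δ < 1`, then for any two
disjointly supported vectors `x, x'` whose supports together have size at most
`s`, `|⟨Ax, Ax'⟩| ≤ δ‖x‖₂‖x'‖₂`. -/
theorem rip_inner_product_bound (d r s : ℕ) (δ : ℝ) (hδ0 : 0 ≤ δ) (hδ1 : δ < 1)
    (A : Matrix (Fin d) (Fin r) ℝ)
    (hRIP : ∀ v : Fin r → ℝ, (Finset.univ.filter fun j => v j ≠ 0).card ≤ s →
      (1 - δ) * (∑ j, (v j)^2) ≤ (∑ i, (A.mulVec v i)^2) ∧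
      (∑ i, (A.mulVec v i)^2) ≤ (1 + δ) * (∑ j, (v j)^2))
    (x x' : Fin r → ℝ)
    (hdisj : ∀ j, x j = 0 ∨ x' j = 0)
    (hcard : (Finset.univ.filter fun j => x j ≠ 0).card
      + (Finset.univ.filter fun j => x' j ≠ 0).card ≤ s) :
    |∑ i, A.mulVec x i * A.mulVec x' i|
      ≤ δ * Real.sqrt (∑ j, (x j)^2) * Real.sqrt (∑ j, (x' j)^2) :=
  rip_inner_product_bound_general d r s δ A hRIP x x' hdisj hcard
end

section
/- Let A⁽²⁾ satisfy RIP of order 2s₂ with constant δ₂ < 1 and A⁽¹⁾ have s₁-sparse columns and satisfy RIP of order 2s with constant δ₁ < 1, where s·s₁ ≤ s₂. Then the product A⁽²⁾A⁽¹⁾ is injective on s-sparse vectors, and for any s-sparse x, (1−δ₂)(1−δ₁)‖x‖₂² ≤ ‖A⁽²⁾A⁽¹⁾x‖₂² ≤ (1+δ₂)(1+δ₁)‖x‖₂². -/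
/-!
A column of `A⁽¹⁾` with at most `s₁` nonzeros spreads each nonzero entry of `x` over at most
`s₁` coordinates, so `A⁽¹⁾` maps `2s`-sparse vectors to `2s·s₁ ≤ 2s₂`-sparse ones, where the RIP
of `A⁽²⁾` applies; the two-sided bounds then multiply. Injectivity on `s`-sparse vectors follows
because the difference of two such vectors is `2s`-sparse and the lower bound is positive.
-/

open Finset Matrix

section Sparsity

variable {ι R : Type*} [Fintype ι] [DecidableEq R]

def sparsity [Zero R] (x : ι → R) : ℕ := #{i | x i ≠ 0}

lemma sparsity_sub_le [AddGroup R] (x y : ι → R) :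
    sparsity (x - y) ≤ sparsity x + sparsity y := by
  classical
  refine (card_le_card fun i hi => ?_).trans (card_union_le _ _)
  simp only [mem_filter, mem_univ, true_and, mem_union, Pi.sub_apply] at hi ⊢
  by_contra! h
  exact hi (by rw [h.1, h.2, sub_self])

lemma sparsity_mulVec_le {m : Type*} [Fintype m] [NonUnitalNonAssocSemiring R]
    (A : Matrix m ι R) {c : ℕ} (hA : ∀ j, sparsity (fun i => A i j) ≤ c) (x : ι → R) :
    sparsity (A *ᵥ x) ≤ sparsity x * c := by
  classical
  have hsupp : ({i | (A *ᵥ x) i ≠ 0} : Finset m) ⊆ ({j | x j ≠ 0} : Finset ι).biUnion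
      fun j => {i | A i j ≠ 0} := by
    intro i hi
    have hi : ∑ j, A i j * x j ≠ 0 := (mem_filter.mp hi).2
    obtain ⟨j, -, hj⟩ := exists_ne_zero_of_sum_ne_zero hi
    exact mem_biUnion.mpr ⟨j, by simpa using right_ne_zero_of_mul hj,
      by simpa using left_ne_zero_of_mul hj⟩
  calc sparsity (A *ᵥ x)
      ≤ ∑ j ∈ {j | x j ≠ 0}, #{i | A i j ≠ 0} := (card_le_card hsupp).trans card_biUnion_le
    _ ≤ sparsity x * c := sum_le_card_nsmul _ _ c fun j _ => hA j

end Sparsity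

section RestrictedBounds

variable {m n p : Type*} [Fintype m] [Fintype n] [Fintype p]

/-- The restricted isometry property of order `k` with constant `δ` is
`HasRestrictedBounds A k (1 - δ) (1 + δ)`. -/
def HasRestrictedBounds (A : Matrix m n ℝ) (k : ℕ) (a b : ℝ) : Prop :=
  ∀ v : n → ℝ, sparsity v ≤ k →
    a * ∑ j, v j ^ 2 ≤ ∑ i, (A *ᵥ v) i ^ 2 ∧ ∑ i, (A *ᵥ v) i ^ 2 ≤ b * ∑ j, v j ^ 2

namespace HasRestrictedBounds

variable {A : Matrix m n ℝ} {k : ℕ} {a b : ℝ}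

lemma mono {k' : ℕ} (h : HasRestrictedBounds A k a b) (hk : k' ≤ k) :
    HasRestrictedBounds A k' a b :=
  fun v hv => h v (hv.trans hk)

lemma injOn (h : HasRestrictedBounds A (2 * k) a b) (ha : 0 < a) :
    Set.InjOn (A *ᵥ ·) {x | sparsity x ≤ k} := by
  intro x hx x' hx' hxx'
  have hsparse : sparsity (x - x') ≤ 2 * k :=
    (sparsity_sub_le x x').trans ((add_le_add hx hx').trans_eq (two_mul k).symm)
  have hdiff : a * ∑ j, (x - x') j ^ 2 ≤ 0 := by
    simpa [mulVec_sub, hxx'] using (h (x - x') hsparse).1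
  have hsq : ∑ j, (x - x') j ^ 2 = 0 :=
    le_antisymm (nonpos_of_mul_nonpos_right hdiff ha) (sum_nonneg fun j _ => sq_nonneg _)
  ext j
  simpa [sub_eq_zero] using (sum_eq_zero_iff_of_nonneg fun j _ => sq_nonneg _).mp hsq j

lemma mul {k' : ℕ} {A₁ : Matrix n p ℝ} {A₂ : Matrix m n ℝ} {a₁ b₁ a₂ b₂ : ℝ}
    (h₁ : HasRestrictedBounds A₁ k a₁ b₁) (h₂ : HasRestrictedBounds A₂ k' a₂ b₂)
    (hsparse : ∀ x, sparsity x ≤ k → sparsity (A₁ *ᵥ x) ≤ k') (ha₁ : 0 < a₁) (ha₂ : 0 ≤ a₂) :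
    HasRestrictedBounds (A₂ * A₁) k (a₂ * a₁) (b₂ * b₁) := by
  intro x hx
  obtain ⟨h₁lo, h₁hi⟩ := h₁ x hx
  obtain ⟨h₂lo, h₂hi⟩ := h₂ (A₁ *ᵥ x) (hsparse x hx)
  rw [← mulVec_mulVec]
  have hX : 0 ≤ ∑ j, x j ^ 2 := sum_nonneg fun j _ => sq_nonneg _
  have hZ : 0 ≤ ∑ i, (A₂ *ᵥ A₁ *ᵥ x) i ^ 2 := sum_nonneg fun i _ => sq_nonneg _
  refine ⟨?_, ?_⟩
  · calc a₂ * a₁ * ∑ j, x j ^ 2 = a₂ * (a₁ * ∑ j, x j ^ 2) := mul_assoc ..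
      _ ≤ _ := (mul_le_mul_of_nonneg_left h₁lo ha₂).trans h₂lo
  · rcases le_or_gt 0 b₂ with hb₂ | hb₂
    · calc _ ≤ b₂ * ∑ j, (A₁ *ᵥ x) j ^ 2 := h₂hi
        _ ≤ b₂ * (b₁ * ∑ j, x j ^ 2) := mul_le_mul_of_nonneg_left h₁hi hb₂
        _ = _ := (mul_assoc ..).symm
    · -- `b₂ < 0` forces `A₁ *ᵥ x = 0`, hence `x = 0` since `a₁ > 0`.
      have hY : ∑ j, (A₁ *ᵥ x) j ^ 2 ≤ 0 := nonpos_of_mul_nonneg_right (hZ.trans h₂hi) hb₂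
      have hX0 : ∑ j, x j ^ 2 = 0 :=
        le_antisymm (nonpos_of_mul_nonpos_right (h₁lo.trans hY) ha₁) hX
      have hY0 : ∑ j, (A₁ *ᵥ x) j ^ 2 = 0 := le_antisymm hY (by simpa [hX0] using h₁lo)
      simpa [hX0, hY0] using h₂hi

end HasRestrictedBounds

end RestrictedBounds

/-- Two-layer composition of RIP (`L = 2` instance of Theorem 1): if `A⁽²⁾`
satisfies RIP of order `2s₂` with constant `δ₂ < 1`, `A⁽¹⁾` has `s₁`-sparse
columns and satisfies RIP of order `2s` with constant `δ₁ < 1`, and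
`s·s₁ ≤ s₂`, then `A⁽²⁾A⁽¹⁾` is injective on `s`-sparse vectors and for every
`s`-sparse `x`,
`(1−δ₂)(1−δ₁)‖x‖² ≤ ‖A⁽²⁾A⁽¹⁾x‖² ≤ (1+δ₂)(1+δ₁)‖x‖²`. -/
theorem two_layer_rip (d2 d1 r1 s s1 s2 : ℕ) (hss : s * s1 ≤ s2)
    (δ1 δ2 : ℝ) (hδ1 : δ1 < 1) (hδ2 : δ2 < 1)
    (A2 : Matrix (Fin d2) (Fin d1) ℝ) (A1 : Matrix (Fin d1) (Fin r1) ℝ)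
    (hA1cols : ∀ j, (Finset.univ.filter fun i => A1 i j ≠ 0).card ≤ s1)
    (hRIP2 : ∀ v : Fin d1 → ℝ, (Finset.univ.filter fun i => v i ≠ 0).card ≤ 2 * s2 →
      (1 - δ2) * (∑ i, (v i)^2) ≤ (∑ i, (A2.mulVec v i)^2) ∧
      (∑ i, (A2.mulVec v i)^2) ≤ (1 + δ2) * (∑ i, (v i)^2))
    (hRIP1 : ∀ v : Fin r1 → ℝ, (Finset.univ.filter fun j => v j ≠ 0).card ≤ 2 * s →
      (1 - δ1) * (∑ j, (v j)^2) ≤ (∑ i, (A1.mulVec v i)^2) ∧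
      (∑ i, (A1.mulVec v i)^2) ≤ (1 + δ1) * (∑ j, (v j)^2)) :
    (∀ x x' : Fin r1 → ℝ,
      (Finset.univ.filter fun j => x j ≠ 0).card ≤ s →
      (Finset.univ.filter fun j => x' j ≠ 0).card ≤ s →
      (A2 * A1).mulVec x = (A2 * A1).mulVec x' → x = x') ∧
    (∀ x : Fin r1 → ℝ, (Finset.univ.filter fun j => x j ≠ 0).card ≤ s →
      (1 - δ2) * (1 - δ1) * (∑ j, (x j)^2) ≤ (∑ i, ((A2 * A1).mulVec x i)^2) ∧
      (∑ i, ((A2 * A1).mulVec x i)^2) ≤ (1 + δ2) * (1 + δ1) * (∑ j, (x j)^2)) := by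
  have h₁ : HasRestrictedBounds A1 (2 * s) (1 - δ1) (1 + δ1) := hRIP1
  have h₂ : HasRestrictedBounds A2 (2 * s2) (1 - δ2) (1 + δ2) := hRIP2
  have hsparse (x : Fin r1 → ℝ) (hx : sparsity x ≤ 2 * s) : sparsity (A1 *ᵥ x) ≤ 2 * s2 :=
    (sparsity_mulVec_le A1 hA1cols x).trans (by nlinarith)
  have hprod : HasRestrictedBounds (A2 * A1) (2 * s) ((1 - δ2) * (1 - δ1)) ((1 + δ2) * (1 + δ1)) :=
    h₁.mul h₂ hsparse (by linarith) (by linarith)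
  exact ⟨fun x x' hx hx' => hprod.injOn (mul_pos (by linarith) (by linarith)) hx hx',
    hprod.mono (by omega)⟩
end
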